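/- arXiv:2007.01477 — 2 statements merged into one kernel-verified Lean document; each statement's English description precedes it below -/
import Mathlib

section
/- There do not exist odd integers d₁ ≥ d₂ ≥ d₃ ≥ d₄ ≥ d₅ ≥ d₆, each strictly greater than 1, such that dᵢ² divides N := 1 + 2(d₁² + d₂² + d₃² + d₄² + d₅² + d₆²) for every i = 1, …, 6. -/
/-!
Odd squares are `1 mod 8`, so `N = 1 + 2 ∑ dᵢ² ≡ 5 (mod 8)` and every cofactor `N / dᵢ²` is
`5 mod 8`. Size bounds then leave only `N = 5 d₁²`, whence `3 d₁² = 1 + 2 (d₂² + ⋯ + d₆²)`;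
next `N = 5 d₂²` (the cofactor `13` would make `5 · 13` a square), so `d₂ = d₁` and
`d₁² = 1 + 2 (d₃² + ⋯ + d₆²)`; finally the cofactor of `d₃²` lies in `{13, 21, 29, 37}`, and
`5 d₁² = q d₃²` would make `5 q` a square, which none of these is.
-/

theorem Int.sq_modEq_one_of_odd {d : ℤ} (hd : Odd d) : d ^ 2 ≡ 1 [ZMOD 8] := by
  obtain ⟨k, rfl⟩ := hd
  obtain ⟨m, hm⟩ := Int.even_mul_succ_self k
  exact (Int.modEq_iff_dvd.mpr ⟨m, by linear_combination 4 * hm⟩).symm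

theorem Int.isSquare_of_mul_sq_eq_sq {m a b : ℤ} (hb : b ≠ 0) (h : m * b ^ 2 = a ^ 2) :
    IsSquare m := by
  rw [← Rat.isSquare_intCast_iff]
  refine ⟨a / b, ?_⟩
  field_simp
  exact_mod_cast h

theorem Int.not_isSquare_of_sq_lt_of_lt_sq {n r : ℤ} (hr : 0 ≤ r) (hlo : r ^ 2 < n)
    (hhi : n < (r + 1) ^ 2) : ¬ IsSquare n := by
  rintro ⟨t, rfl⟩
  rw [← sq, ← sq_abs t] at hlo hhi
  have h₁ := lt_of_pow_lt_pow_left₀ 2 (abs_nonneg t) hlo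
  have h₂ := lt_of_pow_lt_pow_left₀ 2 (by positivity) hhi
  omega

theorem sq_mul_five_ne_sq_mul {a b q : ℤ} (hb : b ≠ 0)
    (hq : q = 13 ∨ q = 21 ∨ q = 29 ∨ q = 37) : a ^ 2 * 5 ≠ b ^ 2 * q := by
  intro h
  have hsq : IsSquare (5 * q) :=
    Int.isSquare_of_mul_sq_eq_sq (a := 5 * a) hb (by linear_combination -5 * h)
  rcases hq with rfl | rfl | rfl | rfl
  · exact Int.not_isSquare_of_sq_lt_of_lt_sq (r := 8) (by norm_num) (by norm_num) (by norm_num) hsq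
  · exact Int.not_isSquare_of_sq_lt_of_lt_sq (r := 10) (by norm_num) (by norm_num) (by norm_num) hsq
  · exact Int.not_isSquare_of_sq_lt_of_lt_sq (r := 12) (by norm_num) (by norm_num) (by norm_num) hsq
  · exact Int.not_isSquare_of_sq_lt_of_lt_sq (r := 13) (by norm_num) (by norm_num) (by norm_num) hsq

theorem cofactor_bounds_of_odd {N q d : ℤ} (lo hi : ℤ) (hd : Odd d) (h : N = d ^ 2 * q)
    (hlo : d ^ 2 * lo < N) (hhi : N < d ^ 2 * hi) : lo < q ∧ q < hi ∧ q ≡ N [ZMOD 8] := by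
  refine ⟨lt_of_mul_lt_mul_left (h ▸ hlo) (sq_nonneg d),
    lt_of_mul_lt_mul_left (h ▸ hhi) (sq_nonneg d), ?_⟩
  calc q = 1 * q := (one_mul q).symm
    _ ≡ d ^ 2 * q [ZMOD 8] := (Int.sq_modEq_one_of_odd hd).symm.mul_right q
    _ = N := h.symm

theorem no_rank13_perfect_dims (d₁ d₂ d₃ d₄ d₅ d₆ : ℤ) :
    ¬ (Odd d₁ ∧ Odd d₂ ∧ Odd d₃ ∧ Odd d₄ ∧ Odd d₅ ∧ Odd d₆ ∧
       d₁ ≥ d₂ ∧ d₂ ≥ d₃ ∧ d₃ ≥ d₄ ∧ d₄ ≥ d₅ ∧ d₅ ≥ d₆ ∧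
       1 < d₁ ∧ 1 < d₂ ∧ 1 < d₃ ∧ 1 < d₄ ∧ 1 < d₅ ∧ 1 < d₆ ∧
       d₁ ^ 2 ∣ 1 + 2 * (d₁ ^ 2 + d₂ ^ 2 + d₃ ^ 2 + d₄ ^ 2 + d₅ ^ 2 + d₆ ^ 2) ∧
       d₂ ^ 2 ∣ 1 + 2 * (d₁ ^ 2 + d₂ ^ 2 + d₃ ^ 2 + d₄ ^ 2 + d₅ ^ 2 + d₆ ^ 2) ∧
       d₃ ^ 2 ∣ 1 + 2 * (d₁ ^ 2 + d₂ ^ 2 + d₃ ^ 2 + d₄ ^ 2 + d₅ ^ 2 + d₆ ^ 2) ∧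
       d₄ ^ 2 ∣ 1 + 2 * (d₁ ^ 2 + d₂ ^ 2 + d₃ ^ 2 + d₄ ^ 2 + d₅ ^ 2 + d₆ ^ 2) ∧
       d₅ ^ 2 ∣ 1 + 2 * (d₁ ^ 2 + d₂ ^ 2 + d₃ ^ 2 + d₄ ^ 2 + d₅ ^ 2 + d₆ ^ 2) ∧
       d₆ ^ 2 ∣ 1 + 2 * (d₁ ^ 2 + d₂ ^ 2 + d₃ ^ 2 + d₄ ^ 2 + d₅ ^ 2 + d₆ ^ 2)) := by
  rintro ⟨o₁, o₂, o₃, o₄, o₅, o₆, h₁₂, h₂₃, h₃₄, h₄₅, h₅₆, -, -, -, -, -, g₆,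
    ⟨q₁, hq₁⟩, ⟨q₂, hq₂⟩, ⟨q₃, hq₃⟩, -, -, -⟩
  have hN : 1 + 2 * (d₁ ^ 2 + d₂ ^ 2 + d₃ ^ 2 + d₄ ^ 2 + d₅ ^ 2 + d₆ ^ 2) ≡ 13 [ZMOD 8] :=
    calc _ ≡ 1 + 2 * (1 + 1 + 1 + 1 + 1 + 1) [ZMOD 8] := by
          gcongr <;> exact Int.sq_modEq_one_of_odd ‹_›
      _ = 13 := by norm_num
  have s₆ : 9 ≤ d₆ ^ 2 := by
    have : 3 ≤ d₆ := by obtain ⟨k, rfl⟩ := o₆; omega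
    nlinarith
  have e₁₂ : d₂ ^ 2 ≤ d₁ ^ 2 := pow_le_pow_left₀ (by omega) h₁₂ 2
  have e₂₃ : d₃ ^ 2 ≤ d₂ ^ 2 := pow_le_pow_left₀ (by omega) h₂₃ 2
  have e₃₄ : d₄ ^ 2 ≤ d₃ ^ 2 := pow_le_pow_left₀ (by omega) h₃₄ 2
  have e₄₅ : d₅ ^ 2 ≤ d₄ ^ 2 := pow_le_pow_left₀ (by omega) h₄₅ 2
  have e₅₆ : d₆ ^ 2 ≤ d₅ ^ 2 := pow_le_pow_left₀ (by omega) h₅₆ 2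
  obtain rfl : q₁ = 5 := by
    have := cofactor_bounds_of_odd 2 13 o₁ hq₁ (by linarith) (by linarith)
    unfold Int.ModEq at *; omega
  obtain rfl : q₂ = 5 := by
    have := cofactor_bounds_of_odd 4 17 o₂ hq₂ (by linarith) (by linarith)
    obtain rfl | rfl : q₂ = 5 ∨ q₂ = 13 := by unfold Int.ModEq at *; omega
    · rfl
    · exact absurd (hq₁.symm.trans hq₂) (sq_mul_five_ne_sq_mul (by omega) (.inl rfl))
  have := cofactor_bounds_of_odd 10 41 o₃ hq₃ (by linarith) (by linarith)
  refine sq_mul_five_ne_sq_mul (by omega) ?_ (hq₁.symm.trans hq₃)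
  unfold Int.ModEq at *; omega
end

section
/- There do not exist odd integers d₁ ≥ d₂ ≥ d₃ ≥ d₄ ≥ d₅ ≥ d₆ ≥ d₇, each strictly greater than 1, such that dᵢ² divides N := 1 + 2(d₁² + d₂² + d₃² + d₄² + d₅² + d₆² + d₇²) for every i = 1, …, 7. -/
/-!
Odd squares are `1` modulo `8`, so `N ≡ 7 [ZMOD 8]`, and so is `N / d ^ 2` whenever `d` is odd
and `d ^ 2 ∣ N`. Since `N < 15 * d₁ ^ 2`, this forces `N = 7 * d₁ ^ 2`. As `7` is squarefree,
`dᵢ ^ 2 ∣ 7 * d₁ ^ 2` gives `dᵢ ∣ d₁`, so each `dᵢ` is either `d₁` or at most `d₁ / 3`, and no such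
choice is compatible with `5 * d₁ ^ 2 = 1 + 2 * (d₂ ^ 2 + ⋯ + d₇ ^ 2)`.
-/

namespace Int

lemma sq_mul_modEq_eight_of_odd {d : ℤ} (k : ℤ) (hd : Odd d) : d ^ 2 * k ≡ k [ZMOD 8] := by
  refine (Int.modEq_iff_dvd.mpr ?_).symm
  rw [show d ^ 2 * k - k = (d ^ 2 - 1) * k by ring]
  exact (eight_dvd_sq_sub_one_of_odd hd).mul_right k

lemma eq_seven_mul_sq_of_sq_dvd {N d : ℤ} (hd : Odd d) (hN : N ≡ 7 [ZMOD 8]) (hN0 : 0 < N)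
    (hlt : N < 15 * d ^ 2) (hdvd : d ^ 2 ∣ N) : N = 7 * d ^ 2 := by
  obtain ⟨k, rfl⟩ := hdvd
  have hk : k ≡ 7 [ZMOD 8] := (sq_mul_modEq_eight_of_odd k hd).symm.trans hN
  have hd2 : 0 < d ^ 2 := sq_pos_of_ne_zero (by rintro rfl; simp at hd)
  have hk0 : 0 < k := pos_of_mul_pos_right hN0 hd2.le
  have hk15 : k < 15 := lt_of_mul_lt_mul_left (by linarith) hd2.le
  obtain rfl : k = 7 := by unfold Int.ModEq at hk; omega
  ring

lemma dvd_of_sq_dvd_mul_sq {n d e : ℤ} (hn : Squarefree n) (h : d ^ 2 ∣ n * e ^ 2) :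
    d ∣ e := by
  rcases eq_or_ne e 0 with rfl | he
  · exact dvd_zero d
  obtain ⟨g, a, b, hg, hcop, rfl, rfl⟩ := Int.exists_gcd_one' (Int.gcd_pos_of_ne_zero_right d he)
  have hdvd : a ^ 2 ∣ n * b ^ 2 := by
    rw [mul_pow, mul_pow, ← mul_assoc] at h
    exact (mul_dvd_mul_iff_right (by positivity)).mp h
  have ha : a * a ∣ n := by
    rw [← sq]
    exact (Int.isCoprime_iff_gcd_eq_one.mpr hcop).pow.dvd_of_dvd_mul_right hdvd
  exact mul_dvd_mul_right (hn a ha).dvd _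

lemma sq_eq_or_nine_mul_sq_le_of_dvd {d e : ℤ} (he : Odd e) (hd : 0 < d) (he0 : 0 < e)
    (h : d ∣ e) : d ^ 2 = e ^ 2 ∨ 9 * d ^ 2 ≤ e ^ 2 := by
  obtain ⟨m, rfl⟩ := h
  have hm0 : 0 < m := pos_of_mul_pos_right he0 hd.le
  obtain rfl | hm : m = 1 ∨ 3 ≤ m := by obtain ⟨t, rfl⟩ := Odd.of_mul_right he; omega
  · left; ring
  · right
    calc 9 * d ^ 2 = (d * 3) ^ 2 := by ring
      _ ≤ (d * m) ^ 2 := by gcongr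

end Int

theorem no_rank15_perfect_dims (d₁ d₂ d₃ d₄ d₅ d₆ d₇ : ℤ) :
    ¬ (Odd d₁ ∧ Odd d₂ ∧ Odd d₃ ∧ Odd d₄ ∧ Odd d₅ ∧ Odd d₆ ∧ Odd d₇ ∧
       d₁ ≥ d₂ ∧ d₂ ≥ d₃ ∧ d₃ ≥ d₄ ∧ d₄ ≥ d₅ ∧ d₅ ≥ d₆ ∧ d₆ ≥ d₇ ∧
       1 < d₁ ∧ 1 < d₂ ∧ 1 < d₃ ∧ 1 < d₄ ∧ 1 < d₅ ∧ 1 < d₆ ∧ 1 < d₇ ∧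
       d₁ ^ 2 ∣ 1 + 2 * (d₁ ^ 2 + d₂ ^ 2 + d₃ ^ 2 + d₄ ^ 2 + d₅ ^ 2 + d₆ ^ 2 + d₇ ^ 2) ∧
       d₂ ^ 2 ∣ 1 + 2 * (d₁ ^ 2 + d₂ ^ 2 + d₃ ^ 2 + d₄ ^ 2 + d₅ ^ 2 + d₆ ^ 2 + d₇ ^ 2) ∧
       d₃ ^ 2 ∣ 1 + 2 * (d₁ ^ 2 + d₂ ^ 2 + d₃ ^ 2 + d₄ ^ 2 + d₅ ^ 2 + d₆ ^ 2 + d₇ ^ 2) ∧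
       d₄ ^ 2 ∣ 1 + 2 * (d₁ ^ 2 + d₂ ^ 2 + d₃ ^ 2 + d₄ ^ 2 + d₅ ^ 2 + d₆ ^ 2 + d₇ ^ 2) ∧
       d₅ ^ 2 ∣ 1 + 2 * (d₁ ^ 2 + d₂ ^ 2 + d₃ ^ 2 + d₄ ^ 2 + d₅ ^ 2 + d₆ ^ 2 + d₇ ^ 2) ∧
       d₆ ^ 2 ∣ 1 + 2 * (d₁ ^ 2 + d₂ ^ 2 + d₃ ^ 2 + d₄ ^ 2 + d₅ ^ 2 + d₆ ^ 2 + d₇ ^ 2) ∧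
       d₇ ^ 2 ∣ 1 + 2 * (d₁ ^ 2 + d₂ ^ 2 + d₃ ^ 2 + d₄ ^ 2 + d₅ ^ 2 + d₆ ^ 2 + d₇ ^ 2)) := by
  rintro ⟨o₁, o₂, o₃, o₄, o₅, o₆, o₇, h₁₂, h₂₃, h₃₄, h₄₅, h₅₆, h₆₇,
    g₁, g₂, g₃, g₄, g₅, g₆, g₇, v₁, v₂, v₃, v₄, v₅, v₆, v₇⟩
  set N := 1 + 2 * (d₁ ^ 2 + d₂ ^ 2 + d₃ ^ 2 + d₄ ^ 2 + d₅ ^ 2 + d₆ ^ 2 + d₇ ^ 2) with hN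
  have hN8 : N ≡ 7 [ZMOD 8] := by
    have := Int.eight_dvd_sq_sub_one_of_odd o₁; have := Int.eight_dvd_sq_sub_one_of_odd o₂
    have := Int.eight_dvd_sq_sub_one_of_odd o₃; have := Int.eight_dvd_sq_sub_one_of_odd o₄
    have := Int.eight_dvd_sq_sub_one_of_odd o₅; have := Int.eight_dvd_sq_sub_one_of_odd o₆
    have := Int.eight_dvd_sq_sub_one_of_odd o₇
    rw [Int.ModEq, hN]; omega
  have one_lt_sq : ∀ d : ℤ, 1 < d → 1 < d ^ 2 := fun d hd ↦ one_lt_pow₀ hd two_ne_zero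
  have sq_le : ∀ d : ℤ, 1 < d → d ≤ d₁ → d ^ 2 ≤ d₁ ^ 2 := fun d hd h ↦
    pow_le_pow_left₀ (by linarith) h 2
  have hN7 : N = 7 * d₁ ^ 2 := by
    refine Int.eq_seven_mul_sq_of_sq_dvd o₁ hN8 (by positivity) ?_ v₁
    linarith [one_lt_sq d₁ g₁, sq_le d₂ g₂ (by linarith), sq_le d₃ g₃ (by linarith),
      sq_le d₄ g₄ (by linarith), sq_le d₅ g₅ (by linarith), sq_le d₆ g₆ (by linarith),
      sq_le d₇ g₇ (by linarith)]
  have h7 : Squarefree (7 : ℤ) := (Nat.prime_iff_prime_int.mp (by norm_num)).squarefree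
  have dichotomy : ∀ d : ℤ, 1 < d → d ^ 2 ∣ N → d ^ 2 = d₁ ^ 2 ∨ 9 * d ^ 2 ≤ d₁ ^ 2 :=
    fun d hd hdvd ↦ Int.sq_eq_or_nine_mul_sq_le_of_dvd o₁ (by linarith) (by linarith)
      (Int.dvd_of_sq_dvd_mul_sq h7 (hN7 ▸ hdvd))
  rcases dichotomy d₂ g₂ v₂ with e₂ | e₂ <;> rcases dichotomy d₃ g₃ v₃ with e₃ | e₃ <;>
    rcases dichotomy d₄ g₄ v₄ with e₄ | e₄ <;> rcases dichotomy d₅ g₅ v₅ with e₅ | e₅ <;>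
    rcases dichotomy d₆ g₆ v₆ with e₆ | e₆ <;> rcases dichotomy d₇ g₇ v₇ with e₇ | e₇ <;>
    linarith [one_lt_sq d₂ g₂, one_lt_sq d₃ g₃, one_lt_sq d₄ g₄, one_lt_sq d₅ g₅,
      one_lt_sq d₆ g₆, one_lt_sq d₇ g₇]
end
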